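/- arXiv:0906.4473 — 2 statements merged into one kernel-verified Lean document; each statement's English description precedes it below -/
import Mathlib

section
/- For all r, r' ≥ 0, θ' ∈ [-π/2, π/2], and z, z' ∈ ℝ with r² + r'² - 2rr'cosθ' + (z-z')² > 0, one has |(r² + r'² + 2rr'cosθ' + (z-z')²)^{-1/2} - (r² + r'² - 2rr'cosθ' + (z-z')²)^{-1/2}| ≤ 2r / (r² + r'² - 2rr'cosθ' + (z-z')²). -/
/-!
With `A`, `B` the squared distances from `(r, 0, z)` to `X'` and to its mirror image, one has
`A - B = 4 r r' cos θ' ≥ 0`, and `1/√B - 1/√A ≤ (A - B) / (2 B √A)`. Since `r' cos θ' ≤ r' ≤ √A`,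
the right-hand side is at most `2 r / B`.
-/

open Real

theorem one_div_sqrt_sub_one_div_sqrt_le {A B : ℝ} (hB : 0 < B) (hBA : B ≤ A) :
    1 / √B - 1 / √A ≤ (A - B) / (2 * B * √A) := by
  have hsB : 0 < √B := sqrt_pos.2 hB
  have hsA : 0 < √A := sqrt_pos.2 (hB.trans_le hBA)
  have hsBA : √B ≤ √A := sqrt_le_sqrt hBA
  have hdiff : (√A - √B) * (2 * √B) ≤ A - B := by
    calc (√A - √B) * (2 * √B) ≤ (√A - √B) * (√A + √B) := by gcongr; linarith
      _ = A - B := by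
        rw [mul_comm, ← sq_sub_sq, sq_sqrt (hB.le.trans hBA), sq_sqrt hB.le]
  rw [div_sub_div _ _ hsB.ne' hsA.ne', div_le_div_iff₀ (by positivity) (by positivity)]
  calc (1 * √A - √B * 1) * (2 * B * √A) = (√A - √B) * (2 * √B) * (√B * √A) := by
        linear_combination (2 * (√A - √B) * √A) * (mul_self_sqrt hB.le).symm
    _ ≤ (A - B) * (√B * √A) := by gcongr

theorem stmt_7 (r r' θ' z z' : ℝ) (hr : 0 ≤ r) (hr' : 0 ≤ r')
    (hθ : θ' ∈ Set.Icc (-(π/2)) (π/2))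
    (hpos : 0 < r^2 + r'^2 - 2*r*r'*Real.cos θ' + (z - z')^2) :
    |1 / Real.sqrt (r^2 + r'^2 + 2*r*r'*Real.cos θ' + (z - z')^2)
      - 1 / Real.sqrt (r^2 + r'^2 - 2*r*r'*Real.cos θ' + (z - z')^2)|
      ≤ 2*r / (r^2 + r'^2 - 2*r*r'*Real.cos θ' + (z - z')^2) := by
  set c := cos θ'
  set A := r^2 + r'^2 + 2*r*r'*c + (z - z')^2
  set B := r^2 + r'^2 - 2*r*r'*c + (z - z')^2
  have hc : 0 ≤ c := cos_nonneg_of_mem_Icc hθ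
  have hp : 0 ≤ r * r' * c := by positivity
  have hBA : B ≤ A := by linarith
  have hsA : 0 < √A := sqrt_pos.2 (hpos.trans_le hBA)
  have hr'c : r' * c ≤ √A := by
    have hc2 : (r' * c) ^ 2 ≤ r' ^ 2 := by
      rw [mul_pow]; exact mul_le_of_le_one_right (sq_nonneg _) (cos_sq_le_one θ')
    exact le_sqrt_of_sq_le (by linarith [sq_nonneg r, sq_nonneg (z - z')])
  rw [abs_sub_comm, abs_of_nonneg (sub_nonneg.2 (one_div_le_one_div_of_le
    (sqrt_pos.2 hpos) (sqrt_le_sqrt hBA)))]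
  calc 1 / √B - 1 / √A ≤ (A - B) / (2 * B * √A) := one_div_sqrt_sub_one_div_sqrt_le hpos hBA
    _ = 2 * r / B * (r' * c / √A) := by field_simp; ring
    _ ≤ 2 * r / B * 1 := by gcongr; exact div_le_one_of_le₀ hr'c hsA.le
    _ = 2 * r / B := mul_one _
end

section
/- For 1 < p < 2 and any f in W^{1,p}(ℝ), one has ‖f‖_{L^{p/(p−1),1}(ℝ)} ≤ C ‖f‖_{L^p(ℝ)}^{(2p−2)/p} · ‖f'‖_{L^p(ℝ)}^{(2−p)/p}. -/
/-!
With `G = |f|^(p-1) |f'|`, the fundamental theorem of calculus applied to `|f|^p` and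
Hölder's inequality give `‖f‖_∞^p ≤ p ∫ G ≤ p ‖f‖_p^(p-1) ‖f'‖_p =: M^p`, while Chebyshev's
inequality gives `f*(t) ≤ N t^(-1/p)` with `N = ‖f‖_p`. The `L^(p',1)` quasinorm is
`∫₀^∞ t^(-1/p) f*(t) dt`; bounding `f*(t)` by `min M (N t^(-1/p))` and splitting at the crossover
point `t = (N/M)^p` (both pieces converge exactly because `1 < p < 2`) bounds it by a multiple of
`N^(p-1) M^(2-p) = p^((2-p)/p) N^((2p-2)/p) ‖f'‖_p^((2-p)/p)`.
-/

open MeasureTheory ENNReal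

/-- Decreasing rearrangement of `f` with respect to `μ`. -/
noncomputable def rearr {α : Type*} [MeasurableSpace α] (μ : Measure α)
    (f : α → ℝ) (t : ℝ) : ℝ :=
  sInf {s : ℝ | 0 ≤ s ∧ μ {x | s < |f x|} ≤ ENNReal.ofReal t}

/-- Lorentz `L^{p,q}` quasinorm defined via the decreasing rearrangement. -/
noncomputable def lorentzNorm {α : Type*} [MeasurableSpace α] (μ : Measure α)
    (f : α → ℝ) (p q : ℝ≥0∞) : ℝ≥0∞ :=
  if q = ∞ then
    ⨆ t : Set.Ioi (0:ℝ), ENNReal.ofReal ((t : ℝ) ^ (1 / p.toReal) * rearr μ f t)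
  else
    (∫⁻ t in Set.Ioi (0:ℝ),
        (ENNReal.ofReal (t ^ (1 / p.toReal) * rearr μ f t)) ^ q.toReal
          / ENNReal.ofReal t) ^ (1 / q.toReal)

open Set

section Rearrangement

variable {α : Type*} [MeasurableSpace α] {μ : Measure α} {f : α → ℝ}

lemma rearr_le {t s : ℝ} (hs : 0 ≤ s) (h : μ {x | s < |f x|} ≤ ENNReal.ofReal t) :
    rearr μ f t ≤ s :=
  csInf_le ⟨0, fun _ hr => hr.1⟩ ⟨hs, h⟩

lemma rearr_le_of_forall_abs_le {M : ℝ} (hM : 0 ≤ M) (hf : ∀ x, |f x| ≤ M) (t : ℝ) :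
    rearr μ f t ≤ M :=
  rearr_le hM (by simp [(hf _).not_gt])

lemma rearr_le_eLpNorm_mul_rpow {q : ℝ≥0∞} (hq0 : q ≠ 0) (hq : q ≠ ∞)
    (hf : AEStronglyMeasurable f μ) (hfq : eLpNorm f q μ ≠ ∞) {t : ℝ} (ht : 0 < t) :
    rearr μ f t ≤ (eLpNorm f q μ).toReal * t ^ (-q.toReal⁻¹) := by
  set N := (eLpNorm f q μ).toReal
  have hr : 0 < q.toReal := ENNReal.toReal_pos hq0 hq
  refine le_of_forall_gt_imp_ge_of_dense fun s hs => ?_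
  have hs0 : 0 < s := lt_of_le_of_lt (by positivity) hs
  refine rearr_le hs0.le ?_
  have hNs : (N / s) ^ q.toReal ≤ t := by
    rw [← Real.le_rpow_inv_iff_of_pos (by positivity) ht.le hr, div_le_iff₀ hs0]
    rw [Real.rpow_neg ht.le, ← div_eq_mul_inv, div_lt_iff₀ (by positivity), mul_comm] at hs
    exact hs.le
  calc μ {x | s < |f x|} ≤ μ {x | ENNReal.ofReal s ≤ ‖f x‖ₑ} :=
        measure_mono fun x hx => by
          simpa [← ofReal_norm] using ENNReal.ofReal_le_ofReal (le_of_lt hx)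
    _ ≤ (ENNReal.ofReal s)⁻¹ ^ q.toReal * eLpNorm f q μ ^ q.toReal :=
        meas_ge_le_mul_pow_eLpNorm_enorm μ hq0 hq hf (ENNReal.ofReal_pos.2 hs0).ne' (by simp)
    _ = ENNReal.ofReal ((N / s) ^ q.toReal) := by
        rw [← ofReal_toReal hfq, ← ENNReal.ofReal_inv_of_pos hs0,
          ← ENNReal.mul_rpow_of_nonneg _ _ hr.le, ← ENNReal.ofReal_mul (by positivity),
          inv_mul_eq_div, ENNReal.ofReal_rpow_of_nonneg (by positivity) hr.le]
    _ ≤ ENNReal.ofReal t := ENNReal.ofReal_le_ofReal hNs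

end Rearrangement

section PowerIntegrals

lemma setLIntegral_Ioc_zero_rpow {r T : ℝ} (hr : -1 < r) (hT : 0 ≤ T) :
    ∫⁻ t in Ioc 0 T, ENNReal.ofReal (t ^ r) = ENNReal.ofReal (T ^ (r + 1) / (r + 1)) := by
  have hint : IntegrableOn (fun t : ℝ => t ^ r) (Ioc 0 T) :=
    (intervalIntegrable_iff_integrableOn_Ioc_of_le hT).1
      (intervalIntegral.intervalIntegrable_rpow' hr)
  rw [← ofReal_integral_eq_lintegral_ofReal hint
      ((ae_restrict_iff' measurableSet_Ioc).2 (.of_forall fun t ht => Real.rpow_nonneg ht.1.le _)),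
    ← intervalIntegral.integral_of_le hT, integral_rpow (Or.inl hr),
    Real.zero_rpow (by linarith), sub_zero]

lemma setLIntegral_Ioi_rpow {r T : ℝ} (hr : r < -1) (hT : 0 < T) :
    ∫⁻ t in Ioi T, ENNReal.ofReal (t ^ r) = ENNReal.ofReal (-T ^ (r + 1) / (r + 1)) := by
  rw [← ofReal_integral_eq_lintegral_ofReal (integrableOn_Ioi_rpow_of_lt hr hT)
      ((ae_restrict_iff' measurableSet_Ioi).2
        (.of_forall fun t ht => Real.rpow_nonneg (hT.trans ht).le _)),
    integral_Ioi_rpow_of_lt hr hT]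

variable {p M N : ℝ}

lemma setLIntegral_rpow_neg_inv_mul_min_le (hp : 1 < p) (hp2 : p < 2) (hM : 0 ≤ M)
    (hN : 0 ≤ N) :
    ∫⁻ t in Ioi 0, ENNReal.ofReal (t ^ (-p⁻¹) * min M (N * t ^ (-p⁻¹)))
      ≤ ENNReal.ofReal ((p / (p - 1) + p / (2 - p)) * (N ^ (p - 1) * M ^ (2 - p))) := by
  have hp0 : 0 < p := by linarith
  by_cases hMN : M = 0 ∨ N = 0
  · have hzero (t : ℝ) (ht : t ∈ Ioi 0) :
        ENNReal.ofReal (t ^ (-p⁻¹) * min M (N * t ^ (-p⁻¹))) = 0 := by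
      have ht' : 0 ≤ t ^ (-p⁻¹) := Real.rpow_nonneg (le_of_lt ht) _
      rcases hMN with rfl | rfl
      · simp [min_eq_left (mul_nonneg hN ht')]
      · simp [min_eq_right hM]
    simp [setLIntegral_congr_fun measurableSet_Ioi hzero]
  push Not at hMN
  have hM0 : 0 < M := hM.lt_of_ne' hMN.1
  have hN0 : 0 < N := hN.lt_of_ne' hMN.2
  -- the two bounds for `min` cross at `T`
  set T := (N / M) ^ p with hT_def
  have hT : 0 < T := by positivity
  have hT_pow (a : ℝ) : T ^ a = (N / M) ^ (p * a) := by
    rw [hT_def, ← Real.rpow_mul (by positivity)]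
  set X := N ^ (p - 1) * M ^ (2 - p) with hX
  have hM_mul : M * (N / M) ^ (p * (-p⁻¹ + 1)) = X := by
    rw [show p * (-p⁻¹ + 1) = p - 1 by field_simp; ring, Real.div_rpow hN hM, hX,
      show (2 : ℝ) - p = 1 - (p - 1) by ring, Real.rpow_sub hM0 1 (p - 1), Real.rpow_one]
    field_simp
  have hN_mul : N * (N / M) ^ (p * (-p⁻¹ + -p⁻¹ + 1)) = X := by
    rw [show p * (-p⁻¹ + -p⁻¹ + 1) = p - 2 by field_simp; ring, Real.div_rpow hN hM, hX,
      show (2 : ℝ) - p = -(p - 2) by ring, Real.rpow_neg hM,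
      show p - 1 = p - 2 + 1 by ring, Real.rpow_add_one hN0.ne']
    field_simp
  have hsmall : ∫⁻ t in Ioc 0 T, ENNReal.ofReal (t ^ (-p⁻¹) * min M (N * t ^ (-p⁻¹)))
      ≤ ENNReal.ofReal (p / (p - 1) * X) := by
    calc _ ≤ ∫⁻ t in Ioc 0 T, ENNReal.ofReal M * ENNReal.ofReal (t ^ (-p⁻¹)) := by
          refine setLIntegral_mono' measurableSet_Ioc fun t ht => ?_
          rw [← ENNReal.ofReal_mul hM, mul_comm M]
          exact ENNReal.ofReal_le_ofReal
            (mul_le_mul_of_nonneg_left (min_le_left _ _) (Real.rpow_nonneg ht.1.le _))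
      _ = ENNReal.ofReal (M * (T ^ (-p⁻¹ + 1) / (-p⁻¹ + 1))) := by
          rw [lintegral_const_mul' _ _ ofReal_ne_top,
            setLIntegral_Ioc_zero_rpow (by linarith [inv_lt_one_of_one_lt₀ hp]) hT.le,
            ENNReal.ofReal_mul hM]
      _ = ENNReal.ofReal (p / (p - 1) * X) := by
          rw [hT_pow, ← mul_div_assoc, hM_mul]
          congr 1
          field_simp
          ring
  have hlarge : ∫⁻ t in Ioi T, ENNReal.ofReal (t ^ (-p⁻¹) * min M (N * t ^ (-p⁻¹)))
      ≤ ENNReal.ofReal (p / (2 - p) * X) := by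
    have hexp : -p⁻¹ + -p⁻¹ < -1 := by
      have : 1 < 2 * p⁻¹ := by rwa [← div_eq_mul_inv, one_lt_div hp0]
      linarith
    calc _ ≤ ∫⁻ t in Ioi T, ENNReal.ofReal N * ENNReal.ofReal (t ^ (-p⁻¹ + -p⁻¹)) := by
          refine setLIntegral_mono' measurableSet_Ioi fun t ht => ?_
          have ht0 : 0 < t := hT.trans ht
          rw [← ENNReal.ofReal_mul hN, Real.rpow_add ht0, mul_left_comm]
          exact ENNReal.ofReal_le_ofReal
            (mul_le_mul_of_nonneg_left (min_le_right _ _) (Real.rpow_nonneg ht0.le _))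
      _ = ENNReal.ofReal (N * (-T ^ (-p⁻¹ + -p⁻¹ + 1) / (-p⁻¹ + -p⁻¹ + 1))) := by
          rw [lintegral_const_mul' _ _ ofReal_ne_top, setLIntegral_Ioi_rpow hexp hT,
            ENNReal.ofReal_mul hN]
      _ = ENNReal.ofReal (p / (2 - p) * X) := by
          rw [hT_pow, neg_div, mul_neg, ← mul_div_assoc, hN_mul,
            show -p⁻¹ + -p⁻¹ + 1 = -((2 - p) / p) by field_simp; ring, div_neg, neg_neg,
            div_div_eq_mul_div]
          ring_nf
  rw [← Ioc_union_Ioi_eq_Ioi hT.le, lintegral_union measurableSet_Ioi (Ioc_disjoint_Ioi le_rfl),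
    add_mul, ENNReal.ofReal_add (mul_nonneg (div_nonneg hp0.le (by linarith)) (by positivity))
      (mul_nonneg (div_nonneg hp0.le (by linarith)) (by positivity))]
  exact add_le_add hsmall hlarge

end PowerIntegrals

lemma lorentzNorm_one_le_of_rearr_le_min {α : Type*} [MeasurableSpace α] {μ : Measure α}
    {f : α → ℝ} {p M N : ℝ} (hp : 1 < p) (hp2 : p < 2) (hM : 0 ≤ M) (hN : 0 ≤ N)
    (hf : ∀ t, 0 < t → rearr μ f t ≤ min M (N * t ^ (-p⁻¹))) :
    lorentzNorm μ f (ENNReal.ofReal (p / (p - 1))) 1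
      ≤ ENNReal.ofReal ((p / (p - 1) + p / (2 - p)) * (N ^ (p - 1) * M ^ (2 - p))) := by
  refine le_trans ?_ (setLIntegral_rpow_neg_inv_mul_min_le hp hp2 hM hN)
  rw [lorentzNorm, if_neg one_ne_top, toReal_ofReal (div_nonneg (by linarith) (by linarith)),
    one_div_div]
  simp only [ENNReal.toReal_one, ENNReal.rpow_one, one_div_one]
  refine setLIntegral_mono' measurableSet_Ioi fun t (ht : 0 < t) => ?_
  have hpow : t ^ ((p - 1) / p) / t = t ^ (-p⁻¹) := by
    rw [← Real.rpow_sub_one ht.ne']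
    congr 1
    field_simp
    ring
  rw [← ENNReal.ofReal_div_of_pos ht, mul_div_right_comm, hpow]
  exact ENNReal.ofReal_le_ofReal (mul_le_mul_of_nonneg_left (hf t ht) (Real.rpow_nonneg ht.le _))

section Holder

variable {α : Type*} [MeasurableSpace α] {μ : Measure α} {f g : α → ℝ} {p : ℝ}

lemma lintegral_abs_rpow_sub_one_mul_abs_le (hp : 1 < p) (hf : AEMeasurable f μ)
    (hg : AEMeasurable g μ) :
    ∫⁻ x, ENNReal.ofReal (|f x| ^ (p - 1) * |g x|) ∂μ
      ≤ eLpNorm f (ENNReal.ofReal p) μ ^ (p - 1) * eLpNorm g (ENNReal.ofReal p) μ := by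
  have hp0 : 0 < p := by linarith
  have hp1 : p - 1 ≠ 0 := (sub_pos.2 hp).ne'
  have henorm (x : α) :
      ENNReal.ofReal (|f x| ^ (p - 1) * |g x|) = ‖f x‖ₑ ^ (p - 1) * ‖g x‖ₑ := by
    rw [ENNReal.ofReal_mul (by positivity),
      ← ENNReal.ofReal_rpow_of_nonneg (abs_nonneg _) (sub_pos.2 hp).le,
      ← Real.norm_eq_abs, ← Real.norm_eq_abs, ofReal_norm, ofReal_norm]
  have hpow (x : α) : (‖f x‖ₑ ^ (p - 1)) ^ (p / (p - 1)) = ‖f x‖ₑ ^ p := by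
    rw [← ENNReal.rpow_mul, mul_div_cancel₀ _ hp1]
  simp only [henorm]
  calc _ ≤ (∫⁻ x, (‖f x‖ₑ ^ (p - 1)) ^ (p / (p - 1)) ∂μ) ^ (1 / (p / (p - 1)))
          * (∫⁻ x, ‖g x‖ₑ ^ p ∂μ) ^ (1 / p) :=
        ENNReal.lintegral_mul_le_Lp_mul_Lq μ (Real.HolderConjugate.conjExponent hp).symm
          (hf.enorm.pow_const _) hg.enorm
    _ = _ := by
        simp only [hpow]
        rw [eLpNorm_eq_lintegral_rpow_enorm_toReal (by simpa using hp0) ofReal_ne_top,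
          eLpNorm_eq_lintegral_rpow_enorm_toReal (by simpa using hp0) ofReal_ne_top,
          toReal_ofReal hp0.le, ← ENNReal.rpow_mul, one_div_div, one_div_mul_eq_div]

lemma integrable_abs_rpow_sub_one_mul_abs (hp : 1 < p) (hf : MemLp f (ENNReal.ofReal p) μ)
    (hg : MemLp g (ENNReal.ofReal p) μ) : Integrable (fun x => |f x| ^ (p - 1) * |g x|) μ := by
  refine ⟨(hf.aemeasurable.abs.pow_const _ |>.mul hg.aemeasurable.abs).aestronglyMeasurable, ?_⟩
  rw [hasFiniteIntegral_iff_ofReal (.of_forall fun x => by positivity)]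
  exact (lintegral_abs_rpow_sub_one_mul_abs_le hp hf.aemeasurable hg.aemeasurable).trans_lt
    (ENNReal.mul_lt_top (ENNReal.rpow_lt_top_of_nonneg (by linarith) hf.eLpNorm_ne_top)
      hg.eLpNorm_lt_top)

lemma integral_abs_rpow_sub_one_mul_abs_le (hp : 1 < p) (hf : MemLp f (ENNReal.ofReal p) μ)
    (hg : MemLp g (ENNReal.ofReal p) μ) :
    ∫ x, |f x| ^ (p - 1) * |g x| ∂μ
      ≤ (eLpNorm f (ENNReal.ofReal p) μ).toReal ^ (p - 1)
        * (eLpNorm g (ENNReal.ofReal p) μ).toReal := by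
  rw [integral_eq_lintegral_of_nonneg_ae (.of_forall fun x => by positivity)
      (integrable_abs_rpow_sub_one_mul_abs hp hf hg).1,
    ENNReal.toReal_rpow, ← ENNReal.toReal_mul]
  exact ENNReal.toReal_mono
    (ENNReal.mul_ne_top (ENNReal.rpow_ne_top_of_nonneg (by linarith) hf.eLpNorm_ne_top)
      hg.eLpNorm_ne_top)
    (lintegral_abs_rpow_sub_one_mul_abs_le hp hf.aemeasurable hg.aemeasurable)

end Holder

lemma MeasureTheory.Integrable.exists_le_norm_lt {g : ℝ → ℝ} (hg : Integrable g) (x : ℝ)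
    {ε : ℝ} (hε : 0 < ε) : ∃ a ≤ x, ‖g a‖ < ε := by
  by_contra! h
  have : volume (Iio x) < ∞ :=
    (measure_mono fun a ha => h a (le_of_lt ha)).trans_lt (hg.measure_norm_ge_lt_top hε)
  simp at this

section SupBound

variable {p : ℝ} {f : ℝ → ℝ}

lemma abs_rpow_le_mul_integral (hp : 1 < p) (hf : Differentiable ℝ f)
    (hfp : Integrable fun y => |f y| ^ p)
    (hG : Integrable fun y => |f y| ^ (p - 1) * |deriv f y|) (x : ℝ) :
    |f x| ^ p ≤ p * ∫ y, |f y| ^ (p - 1) * |deriv f y| := by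
  have hp0 : 0 < p := by linarith
  set G := fun y => |f y| ^ (p - 1) * |deriv f y|
  set ψ := deriv fun y => |f y| ^ p
  have hderiv (y : ℝ) :
      HasDerivAt (fun y => |f y| ^ p) (p * |f y| ^ (p - 2) * f y * deriv f y) y :=
    (hasDerivAt_abs_rpow (f y) hp).comp y (hf y).hasDerivAt
  have hψ_le (y : ℝ) : ‖ψ y‖ ≤ p * G y := by
    rw [show ψ y = _ from (hderiv y).deriv, Real.norm_eq_abs, abs_mul, abs_mul, abs_mul,
      abs_of_pos hp0, abs_of_nonneg (Real.rpow_nonneg (abs_nonneg _) _), mul_assoc p,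
      ← Real.rpow_add_one' (abs_nonneg _) (by linarith), show p - 2 + 1 = p - 1 by ring,
      mul_assoc]
  have hψ_int : Integrable ψ :=
    (hG.const_mul p).mono' (measurable_deriv _).aestronglyMeasurable (.of_forall hψ_le)
  have hFTC (a : ℝ) (ha : a ≤ x) : |f x| ^ p - |f a| ^ p ≤ p * ∫ y, G y :=
    calc |f x| ^ p - |f a| ^ p = ∫ y in a..x, ψ y :=
          (intervalIntegral.integral_eq_sub_of_hasDerivAt
            (fun y _ => (hderiv y).differentiableAt.hasDerivAt) hψ_int.intervalIntegrable).symm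
      _ = ∫ y in Ioc a x, ψ y := intervalIntegral.integral_of_le ha
      _ ≤ ∫ y in Ioc a x, p * G y :=
          setIntegral_mono hψ_int.integrableOn (hG.const_mul p).integrableOn
            fun y => (Real.le_norm_self _).trans (hψ_le y)
      _ ≤ ∫ y, p * G y :=
          setIntegral_le_integral (hG.const_mul p) (.of_forall fun y => by positivity)
      _ = p * ∫ y, G y := integral_const_mul _ _
  -- `|f|^p` is integrable, so it takes arbitrarily small values to the left of `x`
  refine le_of_forall_pos_le_add fun ε hε => ?_
  obtain ⟨a, ha, hsmall⟩ := hfp.exists_le_norm_lt x hε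
  rw [Real.norm_of_nonneg (by positivity)] at hsmall
  linarith [hFTC a ha]

lemma abs_le_of_memLp_deriv (hp : 1 < p) (hf : Differentiable ℝ f)
    (hfp : MemLp f (ENNReal.ofReal p)) (hf'p : MemLp (deriv f) (ENNReal.ofReal p)) (x : ℝ) :
    |f x| ≤ (p * (eLpNorm f (ENNReal.ofReal p)).toReal ^ (p - 1)
      * (eLpNorm (deriv f) (ENNReal.ofReal p)).toReal) ^ p⁻¹ := by
  have hp0 : 0 < p := by linarith
  have hfp_int : Integrable fun y => |f y| ^ p := by
    simpa [toReal_ofReal hp0.le] using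
      hfp.integrable_norm_rpow (by simpa using hp0) ofReal_ne_top
  rw [Real.le_rpow_inv_iff_of_pos (abs_nonneg _) (by positivity) hp0, mul_assoc]
  exact (abs_rpow_le_mul_integral hp hf hfp_int
    (integrable_abs_rpow_sub_one_mul_abs hp hfp hf'p) x).trans
    (mul_le_mul_of_nonneg_left (integral_abs_rpow_sub_one_mul_abs_le hp hfp hf'p) hp0.le)

end SupBound

theorem lorentzNorm_le_eLpNorm_rpow_mul_eLpNorm_deriv_rpow {p : ℝ} (hp : 1 < p) (hp2 : p < 2)
    {f : ℝ → ℝ} (hf : Differentiable ℝ f) (hfp : MemLp f (ENNReal.ofReal p))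
    (hf'p : MemLp (deriv f) (ENNReal.ofReal p)) :
    lorentzNorm volume f (ENNReal.ofReal (p / (p - 1))) 1
      ≤ ENNReal.ofReal ((p / (p - 1) + p / (2 - p)) * p ^ ((2 - p) / p))
        * eLpNorm f (ENNReal.ofReal p) volume ^ ((2 * p - 2) / p)
        * eLpNorm (deriv f) (ENNReal.ofReal p) volume ^ ((2 - p) / p) := by
  have hp0 : 0 < p := by linarith
  have hp1 : 0 < p - 1 := by linarith
  have h2p : 0 < 2 - p := by linarith
  obtain ⟨N, hN, hfN⟩ :
      ∃ N, 0 ≤ N ∧ eLpNorm f (ENNReal.ofReal p) volume = ENNReal.ofReal N :=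
    ⟨_, toReal_nonneg, (ofReal_toReal hfp.eLpNorm_ne_top).symm⟩
  obtain ⟨D, hD, hf'D⟩ :
      ∃ D, 0 ≤ D ∧ eLpNorm (deriv f) (ENNReal.ofReal p) volume = ENNReal.ofReal D :=
    ⟨_, toReal_nonneg, (ofReal_toReal hf'p.eLpNorm_ne_top).symm⟩
  set M := (p * N ^ (p - 1) * D) ^ p⁻¹ with hM
  have hrearr (t : ℝ) (ht : 0 < t) : rearr volume f t ≤ min M (N * t ^ (-p⁻¹)) := by
    refine le_min (rearr_le_of_forall_abs_le (by positivity) (fun x => ?_) t) ?_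
    · simpa [hfN, hf'D, toReal_ofReal hN, toReal_ofReal hD] using
        abs_le_of_memLp_deriv hp hf hfp hf'p x
    · simpa [hfN, toReal_ofReal hN, toReal_ofReal hp0.le] using
        rearr_le_eLpNorm_mul_rpow (by simpa using hp0) ofReal_ne_top hfp.1
          hfp.eLpNorm_ne_top ht
  have hX : N ^ (p - 1) * M ^ (2 - p)
      = p ^ ((2 - p) / p) * N ^ ((2 * p - 2) / p) * D ^ ((2 - p) / p) := by
    have hexp : (2 * p - 2) / p = p - 1 + (p - 1) * (p⁻¹ * (2 - p)) := by
      field_simp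
      ring
    rw [hM, ← Real.rpow_mul (by positivity), Real.mul_rpow (by positivity) hD,
      Real.mul_rpow hp0.le (by positivity), ← Real.rpow_mul hN, hexp,
      Real.rpow_add' hN (hexp ▸ (div_pos (by linarith) hp0).ne'), div_eq_inv_mul]
    ring
  calc lorentzNorm volume f (ENNReal.ofReal (p / (p - 1))) 1
      ≤ ENNReal.ofReal ((p / (p - 1) + p / (2 - p)) * (N ^ (p - 1) * M ^ (2 - p))) :=
        lorentzNorm_one_le_of_rearr_le_min hp hp2 (by positivity) hN hrearr
    _ = _ := by
        have hK : 0 ≤ (p / (p - 1) + p / (2 - p)) * p ^ ((2 - p) / p) := by positivity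
        rw [hX, hfN, hf'D, ENNReal.ofReal_rpow_of_nonneg hN (div_nonneg (by linarith) hp0.le),
          ENNReal.ofReal_rpow_of_nonneg hD (by positivity), ← ENNReal.ofReal_mul hK,
          ← ENNReal.ofReal_mul (by positivity)]
        ring_nf

/-- Gagliardo–Nirenberg inequality with sharp Lorentz second index on `ℝ`. -/
theorem stmt_15 (p : ℝ) (hp : 1 < p) (hp2 : p < 2) :
    ∃ C : ℝ, 0 < C ∧ ∀ f : ℝ → ℝ,
      Differentiable ℝ f →
      MemLp f (ENNReal.ofReal p) volume →
      MemLp (deriv f) (ENNReal.ofReal p) volume →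
      lorentzNorm volume f (ENNReal.ofReal (p/(p-1))) 1
        ≤ ENNReal.ofReal C
          * (eLpNorm f (ENNReal.ofReal p) volume) ^ ((2*p - 2)/p)
          * (eLpNorm (deriv f) (ENNReal.ofReal p) volume) ^ ((2 - p)/p) := by
  have hp1 : 0 < p - 1 := by linarith
  have h2p : 0 < 2 - p := by linarith
  refine ⟨(p / (p - 1) + p / (2 - p)) * p ^ ((2 - p) / p), by positivity, fun f hf hfp hf'p =>
    lorentzNorm_le_eLpNorm_rpow_mul_eLpNorm_deriv_rpow hp hp2 hf hfp hf'p⟩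
end
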